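/- Let G be a standard real Gaussian random variable (mean 0, variance 1). Then for every ρ > 0, E[ Q( √ρ · |G| ) ] = (1/π) · arctan( 1/√ρ ). (Closed-form single-antenna average SEP, equation (n2exp); equivalently, for U ~ Gamma(shape 1/2, rate 1/2), E[Q(√(ρU))] = arctan(ρ^{−1/2})/π.) -/

import Mathlib

/-! Substituting `t = |x| u` in the tail integral defining `Q` and swapping the integrals gives
`E[Q(a|G|)] = (2π)⁻¹ ∫_{u > a} ∫_ℝ |x| exp(-(1 + u²) x² / 2) dx du`. The inner integral is
`2 / (1 + u²)`, so the expectation is `1/2 - arctan a / π`, and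
`arctan (1/√ρ) = π/2 - arctan √ρ`. -/

open MeasureTheory ProbabilityTheory Real

/-- The Gaussian Q-function `Q(x) = (1/√(2π)) ∫_x^∞ e^{−t²/2} dt`. -/
noncomputable def gaussQ (x : ℝ) : ℝ :=
  (Real.sqrt (2 * Real.pi))⁻¹ * ∫ t in Set.Ioi x, Real.exp (-t ^ 2 / 2)

open Set Function

lemma integrable_exp_neg_sq_div_two : Integrable fun t : ℝ => exp (-t ^ 2 / 2) :=
  (integrable_exp_neg_mul_sq (b := 1 / 2) (by norm_num)).congr
    (ae_of_all _ fun t => by ring_nf)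

lemma gaussQ_antitone : Antitone gaussQ := fun _ _ hab =>
  mul_le_mul_of_nonneg_left
    (setIntegral_mono_set integrable_exp_neg_sq_div_two.integrableOn
      (ae_of_all _ fun _ => (exp_pos _).le) (Ioi_subset_Ioi hab).eventuallyLE)
    (inv_nonneg.mpr (sqrt_nonneg _))

lemma gaussQ_mul_of_pos (a : ℝ) {c : ℝ} (hc : 0 < c) :
    gaussQ (c * a) = (√(2 * π))⁻¹ * ∫ u in Ioi a, c * exp (-(c * u) ^ 2 / 2) := by
  rw [gaussQ, ← integral_comp_mul_left_Ioi' _ a hc, smul_eq_mul, integral_const_mul]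

lemma integral_Ioi_mul_exp_neg_mul_sq {b : ℝ} (hb : 0 < b) :
    ∫ x in Ioi 0, x * exp (-b * x ^ 2) = (2 * b)⁻¹ := by
  apply Complex.ofReal_injective
  rw [← integral_complex_ofReal]
  push_cast
  exact integral_mul_cexp_neg_mul_sq (by simpa using hb)

lemma integral_abs_mul_exp_neg_mul_sq {b : ℝ} (hb : 0 < b) :
    ∫ x, |x| * exp (-b * x ^ 2) = b⁻¹ := by
  have h := integral_comp_abs (f := fun x => x * exp (-b * x ^ 2))
  simp only [sq_abs] at h
  rw [h, integral_Ioi_mul_exp_neg_mul_sq hb]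
  field_simp

lemma gaussianPDFReal_mul_gaussQ_mul_abs (a : ℝ) {x : ℝ} (hx : x ≠ 0) :
    gaussianPDFReal 0 1 x * gaussQ (a * |x|) =
      (2 * π)⁻¹ * ∫ u in Ioi a, |x| * exp (-((1 + u ^ 2) / 2) * x ^ 2) := by
  have hpdf : gaussianPDFReal 0 1 x = (√(2 * π))⁻¹ * exp (-x ^ 2 / 2) := by
    simp [gaussianPDFReal]
  have hexp : ∀ u : ℝ, exp (-((1 + u ^ 2) / 2) * x ^ 2) =
      exp (-x ^ 2 / 2) * exp (-(|x| * u) ^ 2 / 2) := fun u => by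
    rw [← exp_add, mul_pow, sq_abs]; ring_nf
  have h2π : (2 * π)⁻¹ = (√(2 * π))⁻¹ * (√(2 * π))⁻¹ := by
    rw [← mul_inv, mul_self_sqrt (by positivity)]
  simp_rw [hpdf, mul_comm a, gaussQ_mul_of_pos a (abs_pos.mpr hx), hexp, h2π, mul_assoc,
    ← integral_const_mul]
  congr 1; ext u; ring

lemma integral_abs_mul_exp_neg_one_add_sq_div_two_mul_sq (u : ℝ) :
    ∫ x, |x| * exp (-((1 + u ^ 2) / 2) * x ^ 2) = 2 * (1 + u ^ 2)⁻¹ := by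
  rw [integral_abs_mul_exp_neg_mul_sq (by positivity)]
  field_simp

lemma integrable_abs_mul_exp_neg_one_add_sq_mul_sq :
    Integrable (uncurry fun x u : ℝ => |x| * exp (-((1 + u ^ 2) / 2) * x ^ 2))
      (volume.prod volume) := by
  refine (integrable_prod_iff' (by fun_prop)).mpr ⟨ae_of_all _ fun u => ?_, ?_⟩
  · have hb : (0 : ℝ) < (1 + u ^ 2) / 2 := by positivity
    simpa only [uncurry, abs_mul, abs_exp] using (integrable_mul_exp_neg_mul_sq hb).abs
  · simpa only [uncurry, norm_mul, norm_abs_eq_norm, Real.norm_eq_abs, abs_exp,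
      integral_abs_mul_exp_neg_one_add_sq_div_two_mul_sq] using
      integrable_inv_one_add_sq.const_mul 2

theorem integral_gaussQ_mul_abs_gaussianReal (a : ℝ) :
    ∫ x, gaussQ (a * |x|) ∂gaussianReal 0 1 = 1 / 2 - arctan a / π := by
  have hpdf : (fun x => gaussianPDFReal 0 1 x * gaussQ (a * |x|)) =ᵐ[volume]
      fun x => (2 * π)⁻¹ * ∫ u in Ioi a, |x| * exp (-((1 + u ^ 2) / 2) * x ^ 2) := by
    filter_upwards [volume.ae_ne 0] with x hx
    exact gaussianPDFReal_mul_gaussQ_mul_abs a hx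
  have hint := integrable_abs_mul_exp_neg_one_add_sq_mul_sq.mono_measure
    (Measure.prod_mono le_rfl (Measure.restrict_le_self (s := Ioi a)))
  calc ∫ x, gaussQ (a * |x|) ∂gaussianReal 0 1
      = ∫ x, gaussianPDFReal 0 1 x * gaussQ (a * |x|) :=
        integral_gaussianReal_eq_integral_smul one_ne_zero
    _ = (2 * π)⁻¹ * ∫ x, ∫ u in Ioi a, |x| * exp (-((1 + u ^ 2) / 2) * x ^ 2) := by
        rw [integral_congr_ae hpdf, integral_const_mul]
    _ = (2 * π)⁻¹ * ∫ u in Ioi a, ∫ x, |x| * exp (-((1 + u ^ 2) / 2) * x ^ 2) := by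
        rw [integral_integral_swap hint]
    _ = 1 / 2 - arctan a / π := by
        simp_rw [integral_abs_mul_exp_neg_one_add_sq_div_two_mul_sq]
        rw [integral_const_mul, integral_Ioi_inv_one_add_sq]
        field_simp

theorem stmt13_general
    {Ω : Type*} [MeasurableSpace Ω] (P : Measure Ω)
    (G : Ω → ℝ) (hGmeas : Measurable G) (hGlaw : Measure.map G P = gaussianReal 0 1)
    (ρ : ℝ) (hρ : 0 < ρ) :
    ∫ ω, gaussQ (Real.sqrt ρ * |G ω|) ∂P = (1 / π) * Real.arctan (1 / Real.sqrt ρ) := by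
  have hG : HasLaw G (gaussianReal 0 1) P := ⟨hGmeas.aemeasurable, hGlaw⟩
  have hQ : AEStronglyMeasurable (fun x => gaussQ (√ρ * |x|)) (gaussianReal 0 1) :=
    (gaussQ_antitone.measurable.comp (by fun_prop)).aestronglyMeasurable
  rw [← Function.comp_def (fun x => gaussQ (√ρ * |x|)) G, hG.integral_comp hQ,
    integral_gaussQ_mul_abs_gaussianReal, one_div √ρ, arctan_inv_of_pos (sqrt_pos.mpr hρ)]
  field_simp

/-- Closed-form single-antenna average SEP:
`E[Q(√ρ·|G|)] = arctan(1/√ρ)/π` for a standard real Gaussian `G`. -/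
theorem stmt13
    {Ω : Type*} [MeasurableSpace Ω] (P : Measure Ω) [IsProbabilityMeasure P]
    (G : Ω → ℝ) (hGmeas : Measurable G) (hGlaw : Measure.map G P = gaussianReal 0 1)
    (ρ : ℝ) (hρ : 0 < ρ) :
    ∫ ω, gaussQ (Real.sqrt ρ * |G ω|) ∂P = (1 / π) * Real.arctan (1 / Real.sqrt ρ) :=
  stmt13_general P G hGmeas hGlaw ρ hρ
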